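/- arXiv:1807.07623 — 3 statements merged into one kernel-verified Lean document; each statement's English description precedes it below -/
import Mathlib

section
/- For any α ∈ [0, 1) and any real z ≥ 1, the inequality (1 - z^{α-1})/(1 - α) ≤ (log z)^α holds, with the convention 0^0 = 1 when z = 1 and α = 0. -/
/-!
Write `z = exp L` with `L ≥ 0`. The left-hand side is `∫₀ᴸ (exp (-v)) ^ (1 - α) dv`, and Hölder's
inequality with exponents `1 / (1 - α)` and `1 / α` against the constant `1` bounds it by
`(∫₀ᴸ exp (-v) dv) ^ (1 - α) * L ^ α ≤ L ^ α`.
-/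

open Real MeasureTheory Set

theorem integral_rpow_le_rpow_integral_mul_measureReal_univ {Ω : Type*} [MeasurableSpace Ω]
    {μ : Measure Ω} [IsFiniteMeasure μ] {f : Ω → ℝ} (hf_nonneg : 0 ≤ᵐ[μ] f)
    (hf : Integrable f μ) {β : ℝ} (hβ0 : 0 < β) (hβ1 : β ≤ 1) :
    ∫ x, f x ^ β ∂μ ≤ (∫ x, f x ∂μ) ^ β * μ.real univ ^ (1 - β) := by
  rcases hβ1.eq_or_lt with rfl | hβ1
  · simp
  have hpq : (1 / β).HolderConjugate (1 / (1 - β)) :=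
    Real.holderConjugate_iff.mpr ⟨by rw [lt_div_iff₀ hβ0]; linarith, by simp⟩
  have hfβ : MemLp (fun x ↦ f x ^ β) (ENNReal.ofReal (1 / β)) μ := by
    have := (memLp_one_iff_integrable.mpr hf).norm_rpow_div (ENNReal.ofReal β)
    rw [ENNReal.toReal_ofReal hβ0.le, one_div, ← ENNReal.ofReal_inv_of_pos hβ0] at this
    rw [one_div]
    refine this.ae_eq ?_
    filter_upwards [hf_nonneg] with x hx
    rw [Real.norm_of_nonneg hx]
  have hff : ∫ x, (f x ^ β) ^ (1 / β) ∂μ = ∫ x, f x ∂μ := by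
    refine integral_congr_ae ?_
    filter_upwards [hf_nonneg] with x hx
    rw [one_div, Real.rpow_rpow_inv hx hβ0.ne']
  have holder := integral_mul_le_Lp_mul_Lq_of_nonneg hpq
    (hf_nonneg.mono fun x hx ↦ Real.rpow_nonneg hx β) (ae_of_all _ fun _ ↦ zero_le_one)
    hfβ (memLp_const 1)
  simpa only [hff, mul_one, Real.one_rpow, integral_const, smul_eq_mul, one_div_one_div] using holder

theorem integral_exp_mul {a b c : ℝ} (hc : c ≠ 0) :
    ∫ x in a..b, exp (c * x) = (exp (c * b) - exp (c * a)) / c := by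
  rw [intervalIntegral.integral_comp_mul_left exp hc, integral_exp, smul_eq_mul, inv_mul_eq_div]

theorem ugly_ineq (α : ℝ) (hα : α ∈ Set.Ico (0 : ℝ) 1) (z : ℝ) (hz : 1 ≤ z) :
    (1 - z ^ (α - 1)) / (1 - α) ≤ (Real.log z) ^ α := by
  obtain ⟨hα0, hα1⟩ := hα
  obtain ⟨L, rfl⟩ : ∃ L, z = exp L := ⟨log z, (exp_log (by linarith)).symm⟩
  have hL : 0 ≤ L := by simpa using Real.log_nonneg hz
  have hexp : ∀ c ≠ 0, ∫ v in Ioc 0 L, exp (c * v) = (exp (c * L) - 1) / c := fun c hc ↦ by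
    rw [← intervalIntegral.integral_of_le hL, integral_exp_mul hc, mul_zero, exp_zero]
  have hlhs : (1 - exp L ^ (α - 1)) / (1 - α) = ∫ v in Ioc 0 L, exp (-v) ^ (1 - α) := by
    have hpow (v : ℝ) : exp (-v) ^ (1 - α) = exp ((α - 1) * v) := by rw [← exp_mul]; ring_nf
    simp_rw [hpow]
    rw [hexp _ (by linarith), ← exp_mul, mul_comm, ← neg_div_neg_eq, neg_sub, neg_sub]
  have hmass : ∫ v in Ioc 0 L, exp (-v) ≤ 1 := by
    have h := hexp (-1) (by norm_num)
    simp only [neg_one_mul, div_neg, div_one, neg_sub] at h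
    linarith [exp_pos (-L)]
  have hmass_nonneg : 0 ≤ ∫ v in Ioc 0 L, exp (-v) := integral_nonneg fun v ↦ (exp_pos (-v)).le
  rw [log_exp, hlhs]
  calc ∫ v in Ioc 0 L, exp (-v) ^ (1 - α)
      ≤ (∫ v in Ioc 0 L, exp (-v)) ^ (1 - α) *
          (volume.restrict (Ioc 0 L)).real univ ^ (1 - (1 - α)) :=
      integral_rpow_le_rpow_integral_mul_measureReal_univ (ae_of_all _ fun v ↦ (exp_pos (-v)).le)
        (continuous_exp.comp continuous_neg).integrableOn_Ioc (sub_pos.2 hα1) (by linarith)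
    _ ≤ L ^ α := by
      rw [measureReal_restrict_apply_univ, volume_real_Ioc_of_le hL, sub_zero, sub_sub_cancel]
      exact mul_le_of_le_one_left (rpow_nonneg hL α) (rpow_le_one hmass_nonneg hmass (by linarith))
end

section
/- For any α ∈ [0, 1], natural K ≥ 2, and natural T ≥ 2: K^{1−α} − (K−1)^{1−α}·T^{−α} − (1 − T^{−1})^α ≤ (K^{1−α} − 1)(1 − T^{−α}). -/
open Real

lemma rpow_succ_le (x β : ℝ) (hx : 1 ≤ x) (hβ0 : 0 ≤ β) (hβ1 : β ≤ 1) :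
    (x + 1) ^ β ≤ x ^ β + β := by
  have hx0 : (0:ℝ) < x := lt_of_lt_of_le one_pos hx
  have h1 : (x + 1) ^ β = x ^ β * (1 + 1/x) ^ β := by
    rw [← Real.mul_rpow hx0.le (by positivity)]
    congr 1
    field_simp
  have h2 : (1 + 1/x) ^ β ≤ 1 + β * (1/x) := by
    have := rpow_one_add_le_one_add_mul_self (s := 1/x) (le_trans (by norm_num) (by positivity : (0:ℝ) ≤ 1/x)) hβ0 hβ1
    linarith [this]
  have h3 : x ^ β * (1 + β * (1/x)) = x ^ β + β * (x ^ β / x) := by ring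
  have h4 : x ^ β / x ≤ 1 := by
    rw [div_le_one hx0]
    calc x ^ β ≤ x ^ (1:ℝ) := Real.rpow_le_rpow_of_exponent_le hx hβ1
    _ = x := Real.rpow_one x
  calc (x + 1) ^ β ≤ x ^ β * (1 + β * (1/x)) := by
        rw [h1]; exact mul_le_mul_of_nonneg_left h2 (by positivity)
    _ = x ^ β + β * (x ^ β / x) := h3
    _ ≤ x ^ β + β := by nlinarith [h4, hβ0]

theorem penalty_constant_bound (α : ℝ) (hα : α ∈ Set.Icc (0 : ℝ) 1)
    (K T : ℕ) (hK : 2 ≤ K) (hT : 2 ≤ T) :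
    (K : ℝ) ^ (1 - α) - ((K : ℝ) - 1) ^ (1 - α) * (T : ℝ) ^ (-α)
        - (1 - (T : ℝ)⁻¹) ^ α
      ≤ ((K : ℝ) ^ (1 - α) - 1) * (1 - (T : ℝ) ^ (-α)) := by
  obtain ⟨hα0, hα1⟩ := hα
  have hK1 : (1:ℝ) ≤ (K:ℝ) - 1 := by
    have : (2:ℝ) ≤ K := by exact_mod_cast hK
    linarith
  have hT1 : (1:ℝ) ≤ (T:ℝ) - 1 := by
    have : (2:ℝ) ≤ T := by exact_mod_cast hT
    linarith
  have hTpos : (0:ℝ) < T := by linarith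
  set a := (K:ℝ) ^ (1 - α)
  set b := ((K:ℝ) - 1) ^ (1 - α)
  set c := (T:ℝ) ^ α
  set d := ((T:ℝ) - 1) ^ α
  set u := (T:ℝ) ^ (-α) with hu_def
  have h1 : a ≤ b + (1 - α) := by
    have := rpow_succ_le ((K:ℝ) - 1) (1 - α) hK1 (by linarith) (by linarith)
    simpa [a, b] using this
  have h2 : c ≤ d + α := by
    have := rpow_succ_le ((T:ℝ) - 1) α hT1 hα0 hα1
    simpa [c, d] using this
  have hcu : c * u = 1 := by
    rw [hu_def, ← Real.rpow_add hTpos]; simp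
  have hupos : 0 < u := Real.rpow_pos_of_pos hTpos _
  have hfrac : (1 - (T:ℝ)⁻¹) ^ α = d * u := by
    have : (1 - (T:ℝ)⁻¹) = ((T:ℝ) - 1) / T := by field_simp
    rw [this, Real.div_rpow (by linarith) hTpos.le, div_eq_mul_inv, hu_def,
      Real.rpow_neg hTpos.le]
  rw [hfrac]
  have key : a - b - d ≤ 1 - c := by linarith
  nlinarith [mul_le_mul_of_nonneg_left key hupos.le, hcu, hupos]
end

section
/- For any α ∈ [0, 1], any learning rate η with 0 < η ≤ 1/4, and any positive reals w, w̃ satisfying (w^{α−1} − 1)/((1−α)η) − (w̃^{α−1} − 1)/((1−α)η) ≤ 1 (i.e., the mirror-descent update with loss at least −1), it holds that w̃^{2−α} ≤ 2·w^{2−α}. -/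
open Real

theorem wrange (α : ℝ) (hα0 : 0 ≤ α) (hα1 : α < 1)
    (η : ℝ) (hη0 : 0 < η) (hη : η ≤ 1 / 4)
    (w wt : ℝ) (hw0 : 0 < w) (hw1 : w ≤ 1) (hwt0 : 0 < wt) (hwt1 : wt ≤ 1)
    (h : (w ^ (α - 1) - 1) / ((1 - α) * η) - (wt ^ (α - 1) - 1) / ((1 - α) * η) ≤ 1) :
    wt ^ (2 - α) ≤ 2 * w ^ (2 - α) := by
  set β : ℝ := 1 - α with hβ
  have hβ0 : 0 < β := by simp [hβ]; linarith
  have hβ1 : β ≤ 1 := by simp [hβ]; linarith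
  have hd : 0 < β * η := mul_pos hβ0 hη0
  have hsub : w ^ (α - 1) - wt ^ (α - 1) ≤ β * η := by
    rw [div_sub_div_same, div_le_one hd] at h
    linarith
  have h1 : 1 ≤ w ^ (α - 1) :=
    Real.one_le_rpow_of_pos_of_le_one_of_nonpos hw0 hw1 (by linarith)
  have hηlt : 1 - η > 0 := by linarith
  -- Bernoulli: (1-η)^β ≤ 1 - β*η
  have hbern : (1 - η) ^ β ≤ 1 - β * η := by
    have := rpow_one_add_le_one_add_mul_self (s := -η) (by linarith) hβ0.le hβ1
    have e : (1 : ℝ) + -η = 1 - η := by ring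
    rw [e] at this
    linarith [this]
  -- wt^(α-1) ≥ (w/(1-η))^(α-1)
  have hkey : (w / (1 - η)) ^ (α - 1) ≤ wt ^ (α - 1) := by
    have h2 : w ^ (α - 1) * (1 - β * η) ≤ wt ^ (α - 1) := by
      nlinarith [hsub, h1]
    have h3 : (w / (1 - η)) ^ (α - 1) = w ^ (α - 1) * (1 - η) ^ β := by
      rw [Real.div_rpow hw0.le hηlt.le, div_eq_mul_inv, ← Real.rpow_neg hηlt.le]
      congr 1
      rw [hβ]; ring
    rw [h3]
    have h4 : w ^ (α - 1) * (1 - η) ^ β ≤ w ^ (α - 1) * (1 - β * η) := by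
      apply mul_le_mul_of_nonneg_left hbern (by positivity)
    linarith
  have hle : wt ≤ w / (1 - η) := by
    have hq : 0 < w / (1 - η) := by positivity
    exact (Real.rpow_le_rpow_iff_of_neg hq hwt0 (by linarith)).mp hkey
  have h2α : (0:ℝ) ≤ 2 - α := by linarith
  have hmain : wt ^ (2 - α) ≤ (w / (1 - η)) ^ (2 - α) :=
    Real.rpow_le_rpow hwt0.le hle h2α
  have hdiv : (w / (1 - η)) ^ (2 - α) = w ^ (2 - α) / (1 - η) ^ (2 - α) :=
    Real.div_rpow hw0.le hηlt.le _
  -- (1-η)^(2-α) ≥ 1/2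
  have hden : (1/2 : ℝ) ≤ (1 - η) ^ (2 - α) := by
    have e1 : (1 - η) ^ (2 - α) ≥ (1 - η) ^ (2 : ℝ) :=
      Real.rpow_le_rpow_of_exponent_ge hηlt (by linarith) (by linarith)
    have e3 : (1/2 : ℝ) ≤ (1 - η) ^ (2 : ℝ) := by
      rw [show (2:ℝ) = ((2:ℕ):ℝ) by norm_num, Real.rpow_natCast]
      nlinarith
    exact le_trans e3 e1
  have hwpos : (0:ℝ) < w ^ (2 - α) := Real.rpow_pos_of_pos hw0 _
  have hdpos : (0:ℝ) < (1 - η) ^ (2 - α) := Real.rpow_pos_of_pos hηlt _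
  calc wt ^ (2 - α) ≤ w ^ (2 - α) / (1 - η) ^ (2 - α) := by rw [← hdiv]; exact hmain
    _ ≤ 2 * w ^ (2 - α) := by
        rw [div_le_iff₀ hdpos]
        nlinarith
end
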